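/- The neo-Hookean Cauchy stress T(F,θ) = K(det F − 1)·I + 2G(F Fᵀ − tr(F Fᵀ)I/d)/(det F)^{1+2/d} satisfies the energy-control condition: there exists C > 0 such that |T(F,θ)| ≤ C(1 + E(F,θ)) for all F ∈ GL⁺(d) and θ ≥ 0, where E(F,θ) = (K/(2 det F))(det F − 1)² + G tr(F Fᵀ)/(det F)^{1+2/d} + (c_v θ/((1+α) det F))(θ/θ₀)^α. -/

import Mathlib

open Matrix

attribute [local instance] Matrix.frobeniusNormedAddCommGroup Matrix.frobeniusNormedSpace

/-! The identity part of the stress is bounded by `K |J - 1| ≤ K (1 + (J - 1)² / J)`, which is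
controlled by the volumetric energy; the deviatoric part by `‖FFᵀ - tr(FFᵀ) I / d‖ ≤ 2 tr(FFᵀ)`,
since `tr(FFᵀ) = ‖F‖²` bounds both `‖FFᵀ‖` and `‖tr(FFᵀ) I / d‖`, and after division by
`(det F)^(1 + 2/d)` this is controlled by the isochoric energy. The thermal energy is nonnegative. -/

namespace Matrix

variable {m n : Type*} [Fintype m] [Fintype n]

theorem trace_mul_transpose_self_eq_frobenius_norm_sq (F : Matrix m n ℝ) :
    (F * Fᵀ).trace = ‖F‖ ^ 2 := by
  have hsum : (0 : ℝ) ≤ ∑ i, ∑ j, ‖F i j‖ ^ (2 : ℝ) := by positivity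
  rw [frobenius_norm_def, ← Real.rpow_natCast, ← Real.rpow_mul hsum]
  norm_num [trace, mul_apply, sq]

theorem frobenius_norm_mul_transpose_self_le_trace (F : Matrix m n ℝ) :
    ‖F * Fᵀ‖ ≤ (F * Fᵀ).trace := by
  calc ‖F * Fᵀ‖ ≤ ‖F‖ * ‖Fᵀ‖ := frobenius_norm_mul F Fᵀ
    _ = (F * Fᵀ).trace := by
      rw [frobenius_norm_transpose, trace_mul_transpose_self_eq_frobenius_norm_sq, sq]

theorem trace_mul_transpose_self_nonneg (F : Matrix m n ℝ) : 0 ≤ (F * Fᵀ).trace :=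
  (norm_nonneg _).trans (frobenius_norm_mul_transpose_self_le_trace F)

variable [DecidableEq n]

theorem frobenius_norm_one_real : ‖(1 : Matrix n n ℝ)‖ = √(Fintype.card n) := by
  simpa using congrArg NNReal.toReal (frobenius_nnnorm_one (n := n) (α := ℝ))

theorem frobenius_norm_div_card_smul_one_le (t : ℝ) :
    ‖(t / Fintype.card n) • (1 : Matrix n n ℝ)‖ ≤ |t| := by
  have hsqrt : √(Fintype.card n : ℝ) ≤ Fintype.card n := by
    rw [Real.sqrt_le_self_iff]
    rcases Nat.eq_zero_or_pos (Fintype.card n) with h | h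
    · left; simp [h]
    · right; exact_mod_cast h
  rw [norm_smul, frobenius_norm_one_real, Real.norm_eq_abs, abs_div, Nat.abs_cast, div_mul_comm]
  exact mul_le_of_le_one_left (abs_nonneg t) (div_le_one_of_le₀ hsqrt (Nat.cast_nonneg _))

theorem frobenius_norm_deviator_le (A : Matrix n n ℝ) :
    ‖A - (A.trace / Fintype.card n) • (1 : Matrix n n ℝ)‖ ≤ ‖A‖ + |A.trace| := by
  grw [norm_sub_le, frobenius_norm_div_card_smul_one_le]

end Matrix

theorem abs_sub_one_le_one_add_sq_sub_one_div {x : ℝ} (hx : 0 < x) :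
    |x - 1| ≤ 1 + (x - 1) ^ 2 / x := by
  rw [abs_le]
  constructor
  · nlinarith [div_nonneg (sq_nonneg (x - 1)) hx.le]
  · rw [← sub_le_iff_le_add', le_div_iff₀ hx]
    nlinarith

section NeoHookean

variable {n : Type*} [Fintype n] [DecidableEq n]

theorem norm_neoHookean_stress_le {K G p : ℝ} (hK : 0 ≤ K) (hG : 0 ≤ G)
    {F : Matrix n n ℝ} (hJ : 0 < F.det) :
    ‖(K * (F.det - 1)) • (1 : Matrix n n ℝ) + (2 * G / F.det ^ p) •
        (F * Fᵀ - ((F * Fᵀ).trace / Fintype.card n) • (1 : Matrix n n ℝ))‖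
      ≤ (K + 2 * (K / (2 * F.det) * (F.det - 1) ^ 2)) * √(Fintype.card n)
        + 4 * (G * (F * Fᵀ).trace / F.det ^ p) := by
  set J := F.det
  set τ := (F * Fᵀ).trace
  have hvol : ‖(K * (J - 1)) • (1 : Matrix n n ℝ)‖
      ≤ (K + 2 * (K / (2 * J) * (J - 1) ^ 2)) * √(Fintype.card n) := by
    rw [norm_smul, frobenius_norm_one_real, Real.norm_eq_abs, abs_mul, abs_of_nonneg hK]
    gcongr
    calc K * |J - 1| ≤ K * (1 + (J - 1) ^ 2 / J) :=
          mul_le_mul_of_nonneg_left (abs_sub_one_le_one_add_sq_sub_one_div hJ) hK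
      _ = K + 2 * (K / (2 * J) * (J - 1) ^ 2) := by field_simp
  have hdev : ‖F * Fᵀ - (τ / Fintype.card n) • (1 : Matrix n n ℝ)‖ ≤ 2 * τ := by
    have hdev' := frobenius_norm_deviator_le (F * Fᵀ)
    rw [abs_of_nonneg (trace_mul_transpose_self_nonneg F)] at hdev'
    linarith [frobenius_norm_mul_transpose_self_le_trace F]
  have hiso : ‖(2 * G / J ^ p) • (F * Fᵀ - (τ / Fintype.card n) • (1 : Matrix n n ℝ))‖
      ≤ 4 * (G * τ / J ^ p) := by
    have hJp : 0 < J ^ p := Real.rpow_pos_of_pos hJ p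
    rw [norm_smul, Real.norm_eq_abs, abs_of_nonneg (by positivity)]
    calc 2 * G / J ^ p * ‖F * Fᵀ - (τ / Fintype.card n) • 1‖ ≤ 2 * G / J ^ p * (2 * τ) := by
          gcongr
      _ = 4 * (G * τ / J ^ p) := by ring
  exact (norm_add_le _ _).trans (add_le_add hvol hiso)

end NeoHookean

theorem neo_hookean_energy_controlled_stress_general {d : ℕ}
    (K G c_v θ₀ α : ℝ)
    (hK : 0 < K) (hG : 0 < G) (hc : 0 < c_v) (hθ₀ : 0 < θ₀) (hα : 0 < α)
    (T : Matrix (Fin d) (Fin d) ℝ → ℝ → Matrix (Fin d) (Fin d) ℝ)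
    (hT : T = fun F _θ => (K * (F.det - 1)) • (1 : Matrix (Fin d) (Fin d) ℝ)
      + (2 * G / F.det ^ (1 + (2:ℝ)/d)) •
          (F * Fᵀ - ((F * Fᵀ).trace / d) • (1 : Matrix (Fin d) (Fin d) ℝ)))
    (E : Matrix (Fin d) (Fin d) ℝ → ℝ → ℝ)
    (hE : E = fun F θ => K / (2 * F.det) * (F.det - 1) ^ 2
      + G * (F * Fᵀ).trace / F.det ^ (1 + (2:ℝ)/d)
      + c_v * θ / ((1 + α) * F.det) * (θ / θ₀) ^ α) :
    ∃ C > (0:ℝ), ∀ (F : Matrix (Fin d) (Fin d) ℝ) (θ : ℝ),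
      0 < F.det → 0 ≤ θ → ‖T F θ‖ ≤ C * (1 + E F θ) := by
  subst hT hE
  refine ⟨(K + 2) * √d + 4, by positivity, fun F θ hJ hθ => ?_⟩
  have hstress := norm_neoHookean_stress_le (p := 1 + 2 / d) hK.le hG.le hJ
  rw [Fintype.card_fin] at hstress
  have hτ := trace_mul_transpose_self_nonneg F
  have hvol : 0 ≤ K / (2 * F.det) * (F.det - 1) ^ 2 := by positivity
  have hiso : 0 ≤ G * (F * Fᵀ).trace / F.det ^ (1 + (2:ℝ) / d) := by positivity
  have hthermal : 0 ≤ c_v * θ / ((1 + α) * F.det) * (θ / θ₀) ^ α := by positivity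
  refine hstress.trans ?_
  have hsqrt : 0 ≤ √(d : ℝ) := Real.sqrt_nonneg _
  nlinarith [mul_nonneg hsqrt hiso, mul_nonneg hsqrt hthermal,
    mul_nonneg (mul_nonneg hK.le hsqrt) (add_nonneg (add_nonneg hvol hiso) hthermal)]

/-- Energy-controlled stress for the neo-Hookean model: there is `C > 0` with
`‖T(F,θ)‖ ≤ C(1 + E(F,θ))` for all `F ∈ GL⁺(d)` and `θ ≥ 0`, where `‖·‖` is
the Frobenius norm. -/
theorem neo_hookean_energy_controlled_stress {d : ℕ} (hd : d = 2 ∨ d = 3)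
    (K G c_v θ₀ α : ℝ)
    (hK : 0 < K) (hG : 0 < G) (hc : 0 < c_v) (hθ₀ : 0 < θ₀) (hα : 0 < α)
    (T : Matrix (Fin d) (Fin d) ℝ → ℝ → Matrix (Fin d) (Fin d) ℝ)
    (hT : T = fun F _θ => (K * (F.det - 1)) • (1 : Matrix (Fin d) (Fin d) ℝ)
      + (2 * G / F.det ^ (1 + (2:ℝ)/d)) •
          (F * Fᵀ - ((F * Fᵀ).trace / d) • (1 : Matrix (Fin d) (Fin d) ℝ)))
    (E : Matrix (Fin d) (Fin d) ℝ → ℝ → ℝ)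
    (hE : E = fun F θ => K / (2 * F.det) * (F.det - 1) ^ 2
      + G * (F * Fᵀ).trace / F.det ^ (1 + (2:ℝ)/d)
      + c_v * θ / ((1 + α) * F.det) * (θ / θ₀) ^ α) :
    ∃ C > (0:ℝ), ∀ (F : Matrix (Fin d) (Fin d) ℝ) (θ : ℝ),
      0 < F.det → 0 ≤ θ → ‖T F θ‖ ≤ C * (1 + E F θ) :=
  neo_hookean_energy_controlled_stress_general K G c_v θ₀ α hK hG hc hθ₀ hα T hT E hE
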